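/- Let d ≥ 1, let K ⊂ ℝ^d be a measurable set with nonempty interior, let q ∈ (0, ∞), and let σ(t) = p(t)/q̃(t) be a univariate rational function with real polynomials p, q̃ such that q̃(t) ≠ 0 for all t ∈ ℝ. Let (r_k)_{k≥1} and (n_k)_{k≥1} be arbitrary sequences of natural numbers and let (ε_k)_{k≥1} be a sequence of real numbers with ε_k → 0. Then there exists a function f ∈ L^q(K) such that for every k ≥ 1, inf_{g ∈ τ_{r_k, n_k}^{σ,d}} (∫_K |f(x) − g(x)|^q dx)^{1/q} ≥ ε_k. -/

import Mathlib

open MeasureTheory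

/-- `Hidden σ d n s` is the set of tuples of hidden-unit functions `h^{(s+1)} = (h_1, …, h_n)` of
the `(s+1)`-st hidden layer of a feedforward network with input dimension `d`, `n` units in each
hidden layer and activation `σ`:  `h^{(1)}_i(x) = σ(w^i · x + b_i)` and
`h^{(ℓ+1)}_i(x) = σ(∑_j a_{ij} h^{(ℓ)}_j(x) + β_i)`. -/
def Hidden (σ : ℝ → ℝ) (d n : ℕ) : ℕ → Set ((Fin d → ℝ) → Fin n → ℝ)
  | 0 => { h | ∃ (w : Fin n → Fin d → ℝ) (b : Fin n → ℝ),
      h = fun x i => σ ((∑ j, w i j * x j) + b i) }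
  | s + 1 => { h | ∃ g ∈ Hidden σ d n s, ∃ (a : Fin n → Fin n → ℝ) (β : Fin n → ℝ),
      h = fun x i => σ ((∑ j, a i j * g x j) + β i) }

/-- `Tau σ r n d` is the set `τ_{r,n}^{σ,d}` of functions `ℝ^d → ℝ` computed by a feedforward
neural network with activation `σ`, at most `r` hidden layers and `n` units in each hidden
layer: `x ↦ ∑_i c_i h^{(s)}_i(x)` for some `1 ≤ s ≤ r`. -/
def Tau (σ : ℝ → ℝ) (r n d : ℕ) : Set ((Fin d → ℝ) → ℝ) :=
  { f | ∃ s : ℕ, s < r ∧ ∃ h ∈ Hidden σ d n s, ∃ c : Fin n → ℝ,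
      f = fun x => ∑ i, c i * h x i }

section DNLRAux
open Polynomial MeasureTheory
namespace DNLR


/-- univariate rational function with nonvanishing denominator, degree ≤ D -/
def RatD (D : ℕ) (φ : ℝ → ℝ) : Prop :=
  ∃ P V : Polynomial ℝ, P.natDegree ≤ D ∧ V.natDegree ≤ D ∧ (∀ t, V.eval t ≠ 0) ∧
    ∀ t, φ t = P.eval t / V.eval t

theorem RatD.mono {D D' : ℕ} {φ : ℝ → ℝ} (h : RatD D φ) (hD : D ≤ D') : RatD D' φ := by
  obtain ⟨P, V, h1, h2, h3, h4⟩ := h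
  exact ⟨P, V, h1.trans hD, h2.trans hD, h3, h4⟩

theorem ratD_const (a : ℝ) : RatD 0 (fun _ => a) :=
  ⟨C a, 1, by simp, by simp, by simp, by simp⟩

theorem ratD_affine (w b : ℝ) : RatD 1 (fun t => w * t + b) := by
  refine ⟨C w * X + C b, 1, ?_, by simp, by simp, by simp⟩
  refine (natDegree_add_le _ _).trans ?_
  simp [natDegree_C_mul_le w X |>.trans natDegree_X_le]

theorem RatD.add {D1 D2 : ℕ} {φ ψ : ℝ → ℝ} (h : RatD D1 φ) (h' : RatD D2 ψ) :
    RatD (D1 + D2) (fun t => φ t + ψ t) := by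
  obtain ⟨P1, V1, a1, b1, c1, d1⟩ := h
  obtain ⟨P2, V2, a2, b2, c2, d2⟩ := h'
  refine ⟨P1 * V2 + P2 * V1, V1 * V2, ?_, ?_, fun t => by simp [mul_ne_zero (c1 t) (c2 t)], fun t => ?_⟩
  · exact (natDegree_add_le _ _).trans (max_le ((natDegree_mul_le).trans (by omega))
      ((natDegree_mul_le).trans (by omega)))
  · exact (natDegree_mul_le).trans (by omega)
  · have := c1 t; have := c2 t
    simp only [d1 t, d2 t, eval_add, eval_mul]
    field_simp
    try ring

theorem RatD.smul {D : ℕ} {φ : ℝ → ℝ} (a : ℝ) (h : RatD D φ) :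
    RatD D (fun t => a * φ t) := by
  obtain ⟨P, V, a1, b1, c1, d1⟩ := h
  refine ⟨C a * P, V, (natDegree_C_mul_le _ _).trans a1, b1, c1, fun t => ?_⟩
  simp [d1 t]; ring

theorem ratD_sum {ι : Type*} (s : Finset ι) {D : ℕ} (φ : ι → ℝ → ℝ)
    (h : ∀ i ∈ s, RatD D (φ i)) : RatD (s.card * D) (fun t => ∑ i ∈ s, φ i t) := by
  induction s using Finset.cons_induction with
  | empty => simpa using ratD_const 0
  | cons i s his ih =>
    simp only [Finset.sum_cons, Finset.card_cons]
    have h1 := h i (Finset.mem_cons_self _ _)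
    have h2 := ih (fun j hj => h j (Finset.mem_cons_of_mem hj))
    have := h1.add h2
    rwa [show (s.card + 1) * D = D + s.card * D by ring]

/-- key algebraic identity -/
theorem sum_pow_eq (p : Polynomial ℝ) (m : ℕ) (hm : p.natDegree < m + 1) (u v : ℝ) (hv : v ≠ 0) :
    (∑ i ∈ Finset.range (m + 1), p.coeff i * u ^ i * v ^ (m - i)) = v ^ m * p.eval (u / v) := by
  rw [eval_eq_sum_range' hm, Finset.mul_sum]
  refine Finset.sum_congr rfl fun i hi => ?_
  have hi' : i ≤ m := by simpa [Nat.lt_succ_iff] using hi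
  have : v ^ m = v ^ (m - i) * v ^ i := by rw [← pow_add]; congr 1; omega
  rw [div_pow, this]
  field_simp

theorem RatD.comp_sigma {σ : ℝ → ℝ} {p Q : Polynomial ℝ} (hQ : ∀ t : ℝ, Q.eval t ≠ 0)
    (hσ : σ = fun t => p.eval t / Q.eval t) {D : ℕ} {φ : ℝ → ℝ} (h : RatD D φ)
    (m : ℕ) (hp : p.natDegree ≤ m) (hQm : Q.natDegree ≤ m) :
    RatD (m * D) (fun t => σ (φ t)) := by
  obtain ⟨P, V, a1, b1, c1, d1⟩ := h
  classical
  set Num : Polynomial ℝ := ∑ i ∈ Finset.range (m + 1), C (p.coeff i) * P ^ i * V ^ (m - i) with hNum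
  set Den : Polynomial ℝ := ∑ i ∈ Finset.range (m + 1), C (Q.coeff i) * P ^ i * V ^ (m - i) with hDen
  have degbound : ∀ (c : ℕ → ℝ),
      (∑ i ∈ Finset.range (m + 1), C (c i) * P ^ i * V ^ (m - i)).natDegree ≤ m * D := by
    intro c
    refine (natDegree_sum_le _ _).trans ?_
    rw [Finset.fold_max_le]
    refine ⟨Nat.zero_le _, fun i hi => ?_⟩
    have hi' : i ≤ m := by simp [Nat.lt_succ_iff] at hi; omega
    refine (natDegree_mul_le).trans ?_
    have h1 : (C (c i) * P ^ i).natDegree ≤ i * D :=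
      (natDegree_mul_le).trans (by simpa using (natDegree_pow_le_of_le i a1))
    have h2 : (V ^ (m - i)).natDegree ≤ (m - i) * D := natDegree_pow_le_of_le _ b1
    calc (C (c i) * P ^ i).natDegree + (V ^ (m - i)).natDegree ≤ i * D + (m - i) * D := by omega
    _ ≤ m * D := by
        have : i * D + (m - i) * D = (i + (m - i)) * D := by ring
        rw [this]; have : i + (m - i) = m := by omega
        rw [this]
  have evalNum : ∀ t, Num.eval t = V.eval t ^ m * p.eval (P.eval t / V.eval t) := by
    intro t
    rw [← sum_pow_eq p m (by omega) _ _ (c1 t), hNum]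
    simp [eval_finset_sum]
  have evalDen : ∀ t, Den.eval t = V.eval t ^ m * Q.eval (P.eval t / V.eval t) := by
    intro t
    rw [← sum_pow_eq Q m (by omega) _ _ (c1 t), hDen]
    simp [eval_finset_sum]
  refine ⟨Num, Den, degbound _, degbound _, fun t => ?_, fun t => ?_⟩
  · rw [evalDen t]
    exact mul_ne_zero (pow_ne_zero _ (c1 t)) (hQ _)
  · simp only [hσ]
    rw [d1 t, evalNum t, evalDen t, mul_div_mul_left]
    exact pow_ne_zero _ (c1 t)

/-- alternating pattern with amplitude `A`, half-period `L`, starting at `c` -/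
noncomputable def pattern (A L c : ℝ) (t : ℝ) : ℝ :=
  if Even ⌊(t - c) / L⌋ then A else -A

theorem measurable_pattern (A L c : ℝ) : Measurable (pattern A L c) := by
  unfold pattern
  refine Measurable.ite ?_ measurable_const measurable_const
  have h1 : Measurable fun t : ℝ => ⌊(t - c) / L⌋ :=
    Int.measurable_floor.comp ((measurable_id.sub measurable_const).div measurable_const)
  exact h1 (MeasurableSet.of_discrete (s := {k : ℤ | Even k}))

theorem abs_pattern (A L c : ℝ) (hA : 0 ≤ A) (t : ℝ) : |pattern A L c t| = A := by
  unfold pattern; split <;> simp [abs_of_nonneg hA, hA]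

theorem pattern_eq_on (A L c : ℝ) (hL : 0 < L) (k : ℕ) (t : ℝ)
    (ht : t ∈ Set.Ico (c + k * L) (c + (k + 1) * L)) :
    pattern A L c t = if Even k then A else -A := by
  unfold pattern
  have : ⌊(t - c) / L⌋ = (k : ℤ) := by
    rw [Int.floor_eq_iff]
    obtain ⟨h1, h2⟩ := ht
    constructor
    · rw [le_div_iff₀ hL]; push_cast; linarith
    · rw [div_lt_iff₀ hL]; push_cast; linarith
  rw [this]
  simp [Int.even_coe_nat]

/-- a continuous function with no zero on an interval has constant sign -/
theorem sign_const {φ : ℝ → ℝ} (hcont : Continuous φ) {a b : ℝ}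
    (hz : ∀ t ∈ Set.Icc a b, φ t ≠ 0) :
    (∀ t ∈ Set.Icc a b, 0 < φ t) ∨ (∀ t ∈ Set.Icc a b, φ t < 0) := by
  by_contra hcon
  push_neg at hcon
  obtain ⟨⟨t1, ht1, ht1'⟩, ⟨t2, ht2, ht2'⟩⟩ := hcon
  have h1 : φ t1 < 0 := lt_of_le_of_ne ht1' (hz t1 ht1)
  have h2 : 0 < φ t2 := lt_of_le_of_ne (by linarith [ht2']) (Ne.symm (hz t2 ht2))
  have hsub : Set.uIcc t1 t2 ⊆ Set.Icc a b := Set.uIcc_subset_Icc ht1 ht2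
  have : (0 : ℝ) ∈ Set.uIcc (φ t1) (φ t2) := by
    rw [Set.mem_uIcc]; left; exact ⟨h1.le, h2.le⟩
  obtain ⟨z, hz1, hz2⟩ := intermediate_value_uIcc (hcont.continuousOn (s := Set.uIcc t1 t2)) this
  exact hz z (hsub hz1) hz2

/-- lower bound on one good pair -/
theorem pair_bound {q : ℝ} (hq : 0 < q) {A L c : ℝ} (hL : 0 < L) (hA : 0 ≤ A)
    {φ : ℝ → ℝ} (hcont : Continuous φ) (hmeas : Measurable φ) (i : ℕ)
    (hgood : (∀ t ∈ Set.Icc (c + (2*i) * L) (c + (2*i+2) * L), φ t ≠ 0) ∨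
      (∀ t ∈ Set.Icc (c + (2*i) * L) (c + (2*i+2) * L), φ t = 0)) :
    ENNReal.ofReal (A ^ q * L) ≤
      ∫⁻ t in Set.Ico (c + (2*i) * L) (c + (2*i+2) * L), ‖pattern A L c t - φ t‖₊ ^ q := by
  -- find a half-interval k (=2i or 2i+1) on which |pattern - φ| ≥ A
  obtain ⟨k, hk1, hk2, hlow⟩ : ∃ k : ℕ, 2*i ≤ k ∧ k + 1 ≤ 2*i + 2 ∧
      ∀ t ∈ Set.Ico (c + k * L) (c + (k+1) * L), A ≤ |pattern A L c t - φ t| := by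
    rcases hgood with hgood | hgood
    · rcases sign_const hcont hgood with hpos | hneg
      · refine ⟨2*i+1, by omega, by omega, fun t ht => ?_⟩
        have hpat : pattern A L c t = -A := by
          have := pattern_eq_on A L c hL (2*i+1) t (by push_cast at ht ⊢; convert ht using 3 <;> ring)
          simpa [Nat.even_add_one, parity_simps] using this
        have hφ : 0 < φ t := by
          refine hpos t ⟨?_, ?_⟩ <;> obtain ⟨u1, u2⟩ := ht <;> push_cast at u1 u2 <;> nlinarith
        rw [hpat]
        rw [abs_of_nonpos (by linarith)]
        linarith
      · refine ⟨2*i, le_refl _, by omega, fun t ht => ?_⟩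
        have hpat : pattern A L c t = A := by
          have := pattern_eq_on A L c hL (2*i) t (by push_cast at ht ⊢; convert ht using 3 <;> ring)
          simpa using this
        have hφ : φ t < 0 := by
          refine hneg t ⟨?_, ?_⟩ <;> obtain ⟨u1, u2⟩ := ht <;> push_cast at u1 u2 <;> nlinarith
        rw [hpat, abs_of_nonneg (by linarith)]
        linarith
    · refine ⟨2*i, le_refl _, by omega, fun t ht => ?_⟩
      have hpat : pattern A L c t = A := by
        have := pattern_eq_on A L c hL (2*i) t (by push_cast at ht ⊢; convert ht using 3 <;> ring)
        simpa using this
      have hφ : φ t = 0 := by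
        refine hgood t ⟨?_, ?_⟩ <;> obtain ⟨u1, u2⟩ := ht <;> push_cast at u1 u2 <;> nlinarith
      rw [hpat, hφ, sub_zero, abs_of_nonneg hA]
  have hsub : Set.Ico (c + k * L) (c + (k+1) * L) ⊆
      Set.Ico (c + (2*i) * L) (c + (2*i+2) * L) := by
    have hk1' : (2*(i:ℝ)) ≤ (k:ℝ) := by exact_mod_cast hk1
    have hk2' : ((k:ℝ)+1) ≤ 2*(i:ℝ)+2 := by exact_mod_cast hk2
    apply Set.Ico_subset_Ico <;> nlinarith
  calc ENNReal.ofReal (A ^ q * L)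
      = ENNReal.ofReal (A ^ q) * volume (Set.Ico (c + k * L) (c + (k+1) * L)) := by
        rw [Real.volume_Ico, ENNReal.ofReal_mul (by positivity)]
        congr 2; ring
    _ = ∫⁻ t in Set.Ico (c + k * L) (c + (k+1) * L), ENNReal.ofReal (A ^ q) := by
        rw [setLIntegral_const]
    _ ≤ ∫⁻ t in Set.Ico (c + k * L) (c + (k+1) * L), ‖pattern A L c t - φ t‖₊ ^ q := by
        refine setLIntegral_mono ?_ fun t ht => ?_
        · exact (((measurable_pattern A L c).sub hmeas).nnnorm.coe_nnreal_ennreal).pow_const q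
        · rw [← enorm_eq_nnnorm, Real.enorm_eq_ofReal_abs, ENNReal.ofReal_rpow_of_nonneg (abs_nonneg _) hq.le]
          exact ENNReal.ofReal_le_ofReal (Real.rpow_le_rpow hA (hlow t ht) hq.le)
    _ ≤ _ := lintegral_mono_set hsub

theorem RatD.continuous {D : ℕ} {φ : ℝ → ℝ} (h : RatD D φ) : Continuous φ := by
  obtain ⟨P, V, -, -, hV, hφ⟩ := h
  have : φ = fun t => P.eval t / V.eval t := funext hφ
  rw [this]
  exact P.continuous.div V.continuous hV

/-- main univariate lower bound -/
theorem univar {q : ℝ} (hq : 0 < q) {D N : ℕ} (hN : 4 * (D + 1) ≤ N) {c L A : ℝ}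
    (hL : 0 < L) (hA : 0 ≤ A) {φ : ℝ → ℝ} (hφ : RatD D φ) :
    ENNReal.ofReal ((N : ℝ) * (A ^ q * L) / 2) ≤
      ∫⁻ t in Set.Ico c (c + N * (2 * L)), ‖pattern A L c t - φ t‖₊ ^ q := by
  classical
  have hcont := hφ.continuous
  have hmeas := hcont.measurable
  obtain ⟨P, V, hPdeg, hVdeg, hV, hPV⟩ := hφ
  set pairI : ℕ → Set ℝ := fun i => Set.Ico (c + (2*i) * L) (c + (2*i+2) * L) with hpairI
  set Good : Finset ℕ := (Finset.range N).filter
    (fun i => (∀ t ∈ Set.Icc (c + (2*i) * L) (c + (2*i+2) * L), φ t ≠ 0) ∨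
      (∀ t ∈ Set.Icc (c + (2*i) * L) (c + (2*i+2) * L), φ t = 0)) with hGood
  -- cardinality bound
  have hcard : ((N : ℝ) / 2) ≤ Good.card := by
    have hBad : ((Finset.range N) \ Good).card ≤ 2 * (D + 1) := by
      by_cases hP : P = 0
      · have hzero : ∀ t, φ t = 0 := fun t => by simp [hPV t, hP]
        have : (Finset.range N) \ Good = ∅ := by
          rw [Finset.sdiff_eq_empty_iff_subset]
          intro i hi
          rw [hGood, Finset.mem_filter]
          exact ⟨hi, Or.inr fun t _ => hzero t⟩
        simp [this]
      · -- each bad pair contains a root of P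
        have hsubset : (Finset.range N) \ Good ⊆
            P.roots.toFinset.biUnion (fun z => {(⌊(z - c) / (2*L)⌋).toNat, (⌊(z - c) / (2*L)⌋).toNat - 1}) := by
          intro i hi
          rw [Finset.mem_sdiff, hGood, Finset.mem_filter] at hi
          obtain ⟨hiN, hbad⟩ := hi
          have hbad' : ¬ ((∀ t ∈ Set.Icc (c + (2*i) * L) (c + (2*i+2) * L), φ t ≠ 0) ∨ _) :=
            fun h => hbad ⟨hiN, h⟩
          push_neg at hbad'
          obtain ⟨⟨z, hzmem, hz0⟩, -⟩ := hbad'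
          have hz0' : φ z = 0 := hz0
          have hPz : P.eval z = 0 := by
            have := hPV z
            rw [hz0'] at this
            field_simp [hV z] at this
            simpa using this.symm
          refine Finset.mem_biUnion.mpr ⟨z, ?_, ?_⟩
          · rw [Multiset.mem_toFinset, mem_roots']
            exact ⟨hP, hPz⟩
          · -- i = toNat⌊w⌋ or i = toNat⌊w⌋ - 1 where w = (z-c)/(2L)
            obtain ⟨hz1, hz2⟩ := hzmem
            have hw1 : (i : ℝ) ≤ (z - c) / (2*L) := by
              rw [le_div_iff₀ (by linarith)]; nlinarith
            have hw2 : (z - c) / (2*L) ≤ (i : ℝ) + 1 := by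
              rw [div_le_iff₀ (by linarith)]; nlinarith
            have hf1 : (i : ℤ) ≤ ⌊(z - c) / (2*L)⌋ := Int.le_floor.mpr (by exact_mod_cast hw1)
            have hf2 : ⌊(z - c) / (2*L)⌋ ≤ (i : ℤ) + 1 := by
              calc ⌊(z - c) / (2*L)⌋ ≤ ⌊((i:ℝ)+1)⌋ := Int.floor_mono hw2
                _ = (i:ℤ)+1 := by
                    rw [show ((i:ℝ)+1) = (((i:ℤ)+1 : ℤ):ℝ) by push_cast; ring, Int.floor_intCast]
            simp only [Finset.mem_insert, Finset.mem_singleton]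
            have : ⌊(z - c) / (2*L)⌋ = (i : ℤ) ∨ ⌊(z - c) / (2*L)⌋ = (i : ℤ) + 1 := by omega
            rcases this with h | h <;> [left; right] <;> omega
        have := Finset.card_le_card hsubset
        refine this.trans ?_
        refine (Finset.card_biUnion_le).trans ?_
        have h1 : ∀ z ∈ P.roots.toFinset,
            ({(⌊(z - c) / (2*L)⌋).toNat, (⌊(z - c) / (2*L)⌋).toNat - 1} : Finset ℕ).card ≤ 2 := by
          intro z _
          exact (Finset.card_insert_le _ _).trans (by simp)
        calc ∑ z ∈ P.roots.toFinset, ({(⌊(z - c) / (2*L)⌋).toNat, (⌊(z - c) / (2*L)⌋).toNat - 1} : Finset ℕ).card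
            ≤ ∑ _z ∈ P.roots.toFinset, 2 := Finset.sum_le_sum h1
          _ = P.roots.toFinset.card * 2 := by rw [Finset.sum_const]; ring
          _ ≤ 2 * (D + 1) := by
              have := (Multiset.toFinset_card_le P.roots).trans ((P.card_roots').trans hPdeg)
              omega
    have hGc : N - 2 * (D+1) ≤ Good.card := by
      have h2 : Good ⊆ Finset.range N := Finset.filter_subset _ _
      have := Finset.card_sdiff_add_card_eq_card h2
      rw [Finset.card_range] at this
      omega
    have : (N : ℝ) - 2 * (D+1) ≤ (Good.card : ℝ) := by
      calc (N : ℝ) - 2 * (D+1) ≤ ((N - 2 * (D+1) : ℕ) : ℝ) := by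
            push_cast [Nat.cast_sub (by omega : 2 * (D+1) ≤ N)]
            ring_nf; rfl
        _ ≤ _ := by exact_mod_cast hGc
    have hN' : (4 : ℝ) * (D + 1) ≤ N := by exact_mod_cast hN
    linarith
  -- disjointness of the pairs
  have key : ∀ i j : ℕ, i < j → Disjoint (pairI i) (pairI j) := by
    intro i j hij
    rw [Set.disjoint_left]
    intro t ht1 ht2
    have h1 := ht1.2
    have h2 := ht2.1
    have hij' : (i:ℝ) + 1 ≤ (j:ℝ) := by exact_mod_cast hij
    nlinarith [h1, h2, hL]
  have hdisj : (↑Good : Set ℕ).PairwiseDisjoint pairI := by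
    intro i _ j _ hij
    rcases Nat.lt_or_ge i j with h | h
    · exact key i j h
    · exact (key j i (by omega)).symm
  have hsum : ∑ i ∈ Good, (∫⁻ t in pairI i, ‖pattern A L c t - φ t‖₊ ^ q)
      ≤ ∫⁻ t in Set.Ico c (c + N * (2 * L)), ‖pattern A L c t - φ t‖₊ ^ q := by
    rw [← lintegral_biUnion_finset hdisj (fun b _ => measurableSet_Ico)]
    refine lintegral_mono_set ?_
    intro t ht
    simp only [Set.mem_iUnion] at ht
    obtain ⟨i, hi, hti⟩ := ht
    have hiN : i < N := by
      rw [hGood] at hi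
      exact Finset.mem_range.mp (Finset.mem_filter.mp hi).1
    obtain ⟨h1, h2⟩ := hti
    have hiN' : (i:ℝ) + 1 ≤ (N:ℝ) := by exact_mod_cast hiN
    constructor
    · have : (0:ℝ) ≤ (2*(i:ℝ)) * L := by positivity
      linarith
    · nlinarith
  calc ENNReal.ofReal ((N : ℝ) * (A ^ q * L) / 2)
      ≤ (Good.card : ENNReal) * ENNReal.ofReal (A ^ q * L) := by
        rw [← ENNReal.ofReal_natCast, ← ENNReal.ofReal_mul (by positivity)]
        refine ENNReal.ofReal_le_ofReal ?_
        have hAL : (0:ℝ) ≤ A ^ q * L := by positivity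
        nlinarith
    _ = ∑ _i ∈ Good, ENNReal.ofReal (A ^ q * L) := by
        rw [Finset.sum_const, nsmul_eq_mul]
    _ ≤ ∑ i ∈ Good, (∫⁻ t in pairI i, ‖pattern A L c t - φ t‖₊ ^ q) := by
        refine Finset.sum_le_sum fun i hi => ?_
        rw [hGood, Finset.mem_filter] at hi
        exact pair_bound hq hL hA hcont hmeas i hi.2
    _ ≤ _ := hsum

theorem RatD.congr {D : ℕ} {φ ψ : ℝ → ℝ} (h : RatD D φ) (he : ∀ t, φ t = ψ t) : RatD D ψ := by
  have : φ = ψ := funext he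
  rwa [← this]

theorem hidden_line {σ : ℝ → ℝ} {p Q : Polynomial ℝ} (hQ : ∀ t : ℝ, Q.eval t ≠ 0)
    (hσ : σ = fun t => p.eval t / Q.eval t) {m : ℕ} (hp : p.natDegree ≤ m)
    (hQm : Q.natDegree ≤ m) {d n : ℕ} (z e : Fin d → ℝ) :
    ∀ (s : ℕ), ∀ h ∈ Hidden σ d n s, ∀ i,
      RatD (m * (n * m + 1) ^ s) (fun t => h (fun j => e j * t + z j) i) := by
  intro s
  induction s with
  | zero =>
    rintro h ⟨w, b, rfl⟩ i
    have haff : RatD 1 (fun t => (∑ j, w i j * e j) * t + (∑ j, w i j * z j + b i)) :=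
      ratD_affine _ _
    have : RatD 1 (fun t => (∑ j, w i j * (e j * t + z j)) + b i) := by
      refine haff.congr fun t => ?_
      simp only [mul_add, Finset.sum_add_distrib, Finset.sum_mul]
      simp only [← mul_assoc]; ring
    have := this.comp_sigma hQ hσ m hp hQm
    simpa using this
  | succ s ih =>
    rintro h ⟨g, hg, a, β, rfl⟩ i
    have hsum : RatD ((Finset.univ : Finset (Fin n)).card * (m * (n * m + 1) ^ s))
        (fun t => ∑ j, a i j * g (fun j => e j * t + z j) j) :=
      ratD_sum _ _ (fun j _ => (ih g hg j).smul (a i j))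
    have hin : RatD (n * (m * (n * m + 1) ^ s) + 0)
        (fun t => (∑ j, a i j * g (fun j => e j * t + z j) j) + β i) := by
      simpa [Finset.card_univ] using hsum.add (ratD_const (β i))
    have := hin.comp_sigma hQ hσ m hp hQm
    refine this.mono ?_
    have h1 : m * (n * (m * (n * m + 1) ^ s) + 0) = (n * m) * (m * (n * m + 1) ^ s) := by ring
    rw [h1, pow_succ]
    calc n * m * (m * (n * m + 1) ^ s) ≤ (n * m + 1) * (m * (n * m + 1) ^ s) :=
          Nat.mul_le_mul_right _ (Nat.le_succ _)
    _ = m * ((n * m + 1) ^ s * (n * m + 1)) := by ring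

theorem tau_line {σ : ℝ → ℝ} {p Q : Polynomial ℝ} (hQ : ∀ t : ℝ, Q.eval t ≠ 0)
    (hσ : σ = fun t => p.eval t / Q.eval t) {m : ℕ} (hp : p.natDegree ≤ m)
    (hQm : Q.natDegree ≤ m) {r n d : ℕ} (g : (Fin d → ℝ) → ℝ) (hg : g ∈ Tau σ r n d) (hr : 1 ≤ r)
    (z e : Fin d → ℝ) :
    RatD (n * (m * (n * m + 1) ^ (r - 1))) (fun t => g (fun j => e j * t + z j)) := by
  obtain ⟨s, hs, h, hh, c, rfl⟩ := hg
  have hsum : RatD ((Finset.univ : Finset (Fin n)).card * (m * (n * m + 1) ^ s))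
      (fun t => ∑ i, c i * h (fun j => e j * t + z j) i) :=
    ratD_sum _ _ (fun i _ => (hidden_line hQ hσ hp hQm z e s h hh i).smul (c i))
  refine hsum.mono ?_
  rw [Finset.card_univ, Fintype.card_fin]
  exact Nat.mul_le_mul_left _ (Nat.mul_le_mul_left _ (Nat.pow_le_pow_right (by omega) (by omega)))

theorem hidden_continuous {σ : ℝ → ℝ} (hσc : Continuous σ) {d n : ℕ} :
    ∀ s, ∀ h ∈ Hidden σ d n s, ∀ i, Continuous (fun x => h x i) := by
  intro s
  induction s with
  | zero =>
    rintro h ⟨w, b, rfl⟩ i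
    exact hσc.comp ((continuous_finset_sum _ fun j _ =>
      (continuous_const.mul (continuous_apply j))).add continuous_const)
  | succ s ih =>
    rintro h ⟨g, hg, a, β, rfl⟩ i
    exact hσc.comp ((continuous_finset_sum _ fun j _ =>
      (continuous_const.mul (ih g hg j))).add continuous_const)

theorem tau_continuous {σ : ℝ → ℝ} (hσc : Continuous σ) {r n d : ℕ}
    (g : (Fin d → ℝ) → ℝ) (hg : g ∈ Tau σ r n d) : Continuous g := by
  obtain ⟨s, -, h, hh, c, rfl⟩ := hg
  exact continuous_finset_sum _ fun i _ =>
    continuous_const.mul (hidden_continuous hσc s h hh i)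


/-- tail sup construction -/
theorem tail_sup {q : ℝ} (hq : 0 < q) (ε : ℕ → ℝ)
    (hε : Filter.Tendsto ε Filter.atTop (nhds 0)) :
    ∃ ts : ℕ → ℝ, Antitone ts ∧ (∀ k, 0 ≤ ts k) ∧ (∀ k, (max (ε k) 0) ^ q ≤ ts k) ∧
      Filter.Tendsto ts Filter.atTop (nhds 0) := by
  set e : ℕ → ℝ := fun k => max (ε k) 0 with he
  have hee : Filter.Tendsto e Filter.atTop (nhds 0) := by
    have := hε.max (tendsto_const_nhds : Filter.Tendsto (fun _ : ℕ => (0:ℝ)) Filter.atTop (nhds 0))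
    simpa using this
  set eq : ℕ → ℝ := fun k => e k ^ q with heq
  have heq0 : Filter.Tendsto eq Filter.atTop (nhds 0) := by
    have hc : ContinuousAt (fun x : ℝ => x ^ q) 0 :=
      Real.continuousAt_rpow_const 0 q (Or.inr hq.le)
    have := hc.tendsto.comp hee
    simpa [heq, Real.zero_rpow hq.ne', Function.comp_def] using this
  have hbdd : BddAbove (Set.range eq) := heq0.bddAbove_range
  have hbdd' : ∀ k, BddAbove (Set.range fun i => eq (k + i)) := by
    intro k
    refine hbdd.mono ?_
    rintro x ⟨i, rfl⟩
    exact ⟨k + i, rfl⟩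
  have heqnn : ∀ k, 0 ≤ eq k := fun k => Real.rpow_nonneg (le_max_right _ _) q
  refine ⟨fun k => ⨆ i, eq (k + i), ?_, ?_, ?_, ?_⟩
  · refine antitone_nat_of_succ_le fun k => ?_
    refine ciSup_le fun i => ?_
    have : eq (k + 1 + i) = eq (k + (1 + i)) := by ring_nf
    rw [this]
    exact le_ciSup (hbdd' k) (1 + i)
  · intro k
    exact (heqnn k).trans (by simpa using le_ciSup (hbdd' k) 0)
  · intro k
    simpa using le_ciSup (hbdd' k) 0
  · -- tendsto 0
    have hmono : Antitone fun k => ⨆ i, eq (k + i) := by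
      refine antitone_nat_of_succ_le fun k => ?_
      refine ciSup_le fun i => ?_
      have : eq (k + 1 + i) = eq (k + (1 + i)) := by ring_nf
      rw [this]
      exact le_ciSup (hbdd' k) (1 + i)
    have hbl : BddBelow (Set.range fun k => ⨆ i, eq (k + i)) := by
      refine ⟨0, ?_⟩
      rintro x ⟨k, rfl⟩
      exact (heqnn k).trans (by simpa using le_ciSup (hbdd' k) 0)
    have h5 := tendsto_atTop_ciInf hmono hbl
    have hinf : (⨅ k, ⨆ i, eq (k + i)) = 0 := by
      refine le_antisymm ?_ ?_
      · refine le_of_forall_pos_le_add fun δ hδ => ?_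
        have hev : ∀ᶠ k in Filter.atTop, eq k < δ :=
          heq0.eventually (eventually_lt_nhds hδ)
        obtain ⟨K, hK⟩ := hev.exists_forall_of_atTop
        have : (⨆ i, eq (K + i)) ≤ δ := ciSup_le fun i => (hK (K + i) (by omega)).le
        calc (⨅ k, ⨆ i, eq (k + i)) ≤ ⨆ i, eq (K + i) := ciInf_le hbl K
          _ ≤ δ := this
          _ ≤ 0 + δ := by linarith
      · refine le_ciInf fun k => ?_
        exact (heqnn k).trans (by simpa using le_ciSup (hbdd' k) 0)
    rwa [hinf] at h5



theorem Esymm_eq (m' : ℕ) (t : ℝ) (y : Fin m' → ℝ) :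
    (MeasurableEquiv.piFinSuccAbove (fun _ : Fin (m'+1) => ℝ) 0).symm (t, y) = Fin.cons t y := by
  rw [MeasurableEquiv.piFinSuccAbove_symm_apply]
  funext j
  refine Fin.cases ?_ (fun l => ?_) j
  · simp
  · simp

theorem Eapp_eq (m' : ℕ) (x : Fin (m'+1) → ℝ) :
    (MeasurableEquiv.piFinSuccAbove (fun _ : Fin (m'+1) => ℝ) 0) x
      = (x 0, fun l => x (Fin.succ l)) := by
  have h1 : (MeasurableEquiv.piFinSuccAbove (fun _ : Fin (m'+1) => ℝ) 0)
        ((MeasurableEquiv.piFinSuccAbove (fun _ : Fin (m'+1) => ℝ) 0).symm (x 0, fun l => x (Fin.succ l)))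
      = (x 0, fun l => x (Fin.succ l)) := MeasurableEquiv.apply_symm_apply _ _
  rw [Esymm_eq] at h1
  rw [← h1]
  congr 1
  funext j
  refine Fin.cases ?_ (fun l => ?_) j <;> simp

theorem cons_lintegral (m' : ℕ) (H : (Fin (m'+1) → ℝ) → ENNReal) (hH : Measurable H) :
    ∫⁻ x, H x = ∫⁻ y : Fin m' → ℝ, ∫⁻ t : ℝ, H (Fin.cons t y) := by
  set E := MeasurableEquiv.piFinSuccAbove (fun _ : Fin (m'+1) => ℝ) 0 with hE
  have hmp : MeasurePreserving E (volume : Measure (Fin (m'+1) → ℝ))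
      ((volume : Measure ℝ).prod (volume : Measure (Fin m' → ℝ))) := by
    have h0 := measurePreserving_piFinSuccAbove (fun _ : Fin (m'+1) => (volume : Measure ℝ)) 0
    exact h0
  have h1 : ∫⁻ x, H x = ∫⁻ x, (H ∘ E.symm) (E x) := by
    refine lintegral_congr fun x => ?_
    simp
  rw [h1, hmp.lintegral_comp (hH.comp E.symm.measurable)]
  rw [lintegral_prod_symm _ ((hH.comp E.symm.measurable).aemeasurable)]
  refine lintegral_congr fun y => lintegral_congr fun t => ?_
  simp only [Function.comp_apply, hE, Esymm_eq]

theorem cons_setLIntegral (m' : ℕ) (H : (Fin (m'+1) → ℝ) → ENNReal) (hH : Measurable H)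
    (S : Set ℝ) (T : Set (Fin m' → ℝ)) :
    ∫⁻ x in (MeasurableEquiv.piFinSuccAbove (fun _ : Fin (m'+1) => ℝ) 0) ⁻¹' (S ×ˢ T), H x
      = ∫⁻ y in T, ∫⁻ t in S, H (Fin.cons t y) := by
  set E := MeasurableEquiv.piFinSuccAbove (fun _ : Fin (m'+1) => ℝ) 0 with hE
  have hmp : MeasurePreserving E (volume : Measure (Fin (m'+1) → ℝ))
      ((volume : Measure ℝ).prod (volume : Measure (Fin m' → ℝ))) := by
    have h0 := measurePreserving_piFinSuccAbove (fun _ : Fin (m'+1) => (volume : Measure ℝ)) 0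
    exact h0
  have h1 : ∫⁻ x in E ⁻¹' (S ×ˢ T), H x = ∫⁻ x in E ⁻¹' (S ×ˢ T), (H ∘ E.symm) (E x) := by
    refine lintegral_congr fun x => ?_
    simp
  rw [h1, hmp.setLIntegral_comp_preimage_emb E.measurableEmbedding]
  rw [← Measure.prod_restrict, lintegral_prod_symm _ ((hH.comp E.symm.measurable).aemeasurable)]
  refine lintegral_congr fun y => lintegral_congr fun t => ?_
  simp only [Function.comp_apply, hE, Esymm_eq]


theorem sum_Icc_telescope (u : ℕ → ℝ) (k M : ℕ) (h : k ≤ M + 1) :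
    ∑ j ∈ Finset.Icc k M, (u j - u (j+1)) = u k - u (M+1) := by
  rw [← Finset.Ico_add_one_right_eq_Icc, Finset.sum_Ico_eq_sub _ h, Finset.sum_range_sub' u,
    Finset.sum_range_sub' u]
  ring

end DNLR
end DNLRAux
/-- Let `d ≥ 1`, let `K ⊂ ℝ^d` be measurable with nonempty interior, let
`q ∈ (0, ∞)`, and let `σ = p/q̃` be a rational activation whose denominator vanishes nowhere on
`ℝ`. Then for arbitrary sequences `(r_k)`, `(n_k)` of naturals and any null sequence `(ε_k)`
there is `f ∈ L^q(K)` with `inf_{g ∈ τ_{r_k,n_k}^{σ,d}} ‖f - g‖_{L^q(K)} ≥ ε_k` for all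
`k ≥ 1`. -/
theorem deep_negative_Lq_rational (d : ℕ) (hd : 1 ≤ d) (K : Set (Fin d → ℝ))
    (hKm : MeasurableSet K) (hKint : (interior K).Nonempty) (q : ℝ) (hq : 0 < q)
    (σ : ℝ → ℝ) (p Q : Polynomial ℝ) (hQ : ∀ t : ℝ, Q.eval t ≠ 0)
    (hσ : σ = fun t => p.eval t / Q.eval t)
    (r n : ℕ → ℕ) (hr : ∀ k, 1 ≤ r k) (hn : ∀ k, 1 ≤ n k)
    (ε : ℕ → ℝ) (hε : Filter.Tendsto ε Filter.atTop (nhds 0)) :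
    ∃ f : (Fin d → ℝ) → ℝ, MemLp f (ENNReal.ofReal q) (volume.restrict K) ∧
      ∀ k : ℕ, 1 ≤ k → ∀ g ∈ Tau σ (r k) (n k) d,
        ENNReal.ofReal (ε k)
          ≤ eLpNorm (f - g) (ENNReal.ofReal q) (volume.restrict K) := by
  classical
  open DNLR in
  obtain ⟨m', rfl⟩ : ∃ m', d = m' + 1 := ⟨d - 1, by omega⟩
  set md := max p.natDegree Q.natDegree with hmd
  set D : ℕ → ℕ := fun k => n k * (md * (n k * md + 1) ^ (r k - 1)) with hD
  have hσc : Continuous σ := by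
    rw [hσ]; exact p.continuous.div Q.continuous hQ
  -- geometry: a cube inside K
  obtain ⟨x0, hx0⟩ := hKint
  obtain ⟨η, hη, hball⟩ := Metric.isOpen_iff.mp isOpen_interior x0 hx0
  set ρ : ℝ := η / 2 with hρdef
  have hρ : 0 < ρ := by positivity
  have hbox : ∀ x : Fin (m'+1) → ℝ, (∀ j, x j ∈ Set.Ico (x0 j - ρ) (x0 j + ρ)) → x ∈ K := by
    intro x hx
    refine interior_subset (hball ?_)
    rw [Metric.mem_ball, dist_pi_lt_iff hη]
    intro bb
    obtain ⟨h1, h2⟩ := hx bb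
    rw [Real.dist_eq, abs_lt]
    constructor <;> [linarith; linarith]
  set ℓ : ℕ → ℝ := fun j => ρ / 2 ^ j with hℓ
  have hℓpos : ∀ j, 0 < ℓ j := fun j => by rw [hℓ]; positivity
  set cc : ℕ → ℝ := fun j => x0 0 + ρ - 2 * ℓ j with hcc
  set I : ℕ → Set ℝ := fun j => Set.Ico (cc j) (cc j + ℓ j) with hI
  have hℓle : ∀ j, ℓ j ≤ ρ := by
    intro j
    rw [hℓ]
    simp only
    rw [div_le_iff₀ (by positivity)]
    have h1 : (1:ℝ) ≤ 2 ^ j := one_le_pow₀ (by norm_num)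
    nlinarith [hρ]
  have hIsub : ∀ j, I j ⊆ Set.Ico (x0 0 - ρ) (x0 0 + ρ) := by
    intro j t ht
    obtain ⟨h1, h2⟩ := ht
    have h3 := hℓle j
    have h4 := hℓpos j
    constructor
    · simp only [hcc] at h1; linarith
    · simp only [hcc] at h2; linarith
  have hIdisj : ∀ j1 j2, j1 < j2 → Disjoint (I j1) (I j2) := by
    intro j1 j2 h
    rw [Set.disjoint_left]
    intro t ht1 ht2
    have key : 2 * ℓ j2 ≤ ℓ j1 := by
      rw [hℓ]
      simp only
      rw [show 2 * (ρ / 2 ^ j2) = (2 * ρ) / 2 ^ j2 by ring,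
        div_le_div_iff₀ (by positivity) (by positivity)]
      have h2 : (2:ℝ) ^ (j1 + 1) ≤ 2 ^ j2 := pow_le_pow_right₀ (by norm_num) (by omega)
      rw [pow_succ] at h2
      nlinarith [hρ, pow_pos (show (0:ℝ) < 2 by norm_num) j1, pow_pos (show (0:ℝ) < 2 by norm_num) j2]
    have u1 := ht1.2
    have u2 := ht2.1
    simp only [hcc] at u1 u2
    linarith
  have hIuniq : ∀ {j j' : ℕ} {t : ℝ}, t ∈ I j → j' ≠ j → t ∉ I j' := by
    intro j j' t ht hne ht'
    rcases Nat.lt_or_ge j' j with h | h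
    · exact Set.disjoint_left.mp (hIdisj j' j h) ht' ht
    · exact Set.disjoint_left.mp (hIdisj j j' (by omega)) ht ht'
  -- frequencies and amplitudes
  set N : ℕ → ℕ := fun j => 4 * ((Finset.range (j+1)).sup D + 1) with hN
  have hNpos : ∀ j, 0 < N j := fun j => by simp only [hN]; omega
  have hN4 : ∀ k j, k ≤ j → 4 * (D k + 1) ≤ N j := by
    intro k j hkj
    have h1 : D k ≤ (Finset.range (j+1)).sup D := Finset.le_sup (Finset.mem_range.mpr (by omega))
    simp only [hN]
    omega
  set L : ℕ → ℝ := fun j => ℓ j / (2 * N j) with hL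
  have hLpos : ∀ j, 0 < L j := by
    intro j
    rw [hL]
    have := hNpos j
    have : (0:ℝ) < N j := by exact_mod_cast this
    have := hℓpos j
    positivity
  have hℓeq : ∀ j, (N j : ℝ) * (2 * L j) = ℓ j := by
    intro j
    rw [hL]
    have h0 := hNpos j
    have h0' : (0:ℝ) < N j := by exact_mod_cast h0
    field_simp
  obtain ⟨ts, hts_anti, hts_nn, hts_ge, hts_tend⟩ := tail_sup hq ε hε
  set b : ℕ → ℝ := fun j => ts j - ts (j+1) with hb
  have hb0 : ∀ j, 0 ≤ b j := fun j => sub_nonneg.mpr (hts_anti (Nat.le_succ j))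
  set W : ℝ := (2*ρ)^m' with hW
  have hWpos : 0 < W := by rw [hW]; positivity
  set A : ℕ → ℝ := fun j => (4 * b j / (ℓ j * W)) ^ (1/q) with hA
  have hABase : ∀ j, 0 ≤ 4 * b j / (ℓ j * W) :=
    fun j => div_nonneg (by nlinarith [hb0 j]) (mul_pos (hℓpos j) hWpos).le
  have hA0 : ∀ j, 0 ≤ A j := by
    intro j
    rw [hA]
    exact Real.rpow_nonneg (hABase j) _
  have hAq : ∀ j, A j ^ q = 4 * b j / (ℓ j * W) := by
    intro j
    rw [hA]
    simp only
    rw [← Real.rpow_mul (hABase j), one_div,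
      inv_mul_cancel₀ hq.ne', Real.rpow_one]
  -- the univariate function F
  set F : ℝ → ℝ := fun t => ∑' j, Set.indicator (I j) (pattern (A j) (L j) (cc j)) t with hF
  have hFj : ∀ j t, t ∈ I j → F t = pattern (A j) (L j) (cc j) t := by
    intro j t ht
    rw [hF]
    simp only
    rw [tsum_eq_single j fun j' hj' => Set.indicator_of_notMem (hIuniq ht hj') _]
    exact Set.indicator_of_mem ht _
  have hF0 : ∀ t, (∀ j, t ∉ I j) → F t = 0 := by
    intro t h
    rw [hF]
    simp only
    calc (∑' j, Set.indicator (I j) (pattern (A j) (L j) (cc j)) t)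
        = ∑' (j : ℕ), (0:ℝ) := tsum_congr fun j => Set.indicator_of_notMem (h j) _
      _ = 0 := tsum_zero
  have hFmeas : Measurable F := by
    refine measurable_of_tendsto_metrizable' Filter.atTop
      (f := fun M t => ∑ j ∈ Finset.range M, Set.indicator (I j) (pattern (A j) (L j) (cc j)) t)
      (fun M => Finset.measurable_sum _ fun j _ =>
        (measurable_pattern _ _ _).indicator measurableSet_Ico) ?_
    rw [tendsto_pi_nhds]
    intro t
    by_cases hex : ∃ j, t ∈ I j
    · obtain ⟨j0, hj0⟩ := hex
      have hs : HasSum (fun j => Set.indicator (I j) (pattern (A j) (L j) (cc j)) t)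
          (Set.indicator (I j0) (pattern (A j0) (L j0) (cc j0)) t) :=
        hasSum_single j0 fun j' hj' => Set.indicator_of_notMem (hIuniq hj0 hj') _
      have h2 := hs.tendsto_sum_nat
      rw [hF]
      simp only
      rw [hs.tsum_eq]
      exact h2
    · push_neg at hex
      have hz : ∀ j, Set.indicator (I j) (pattern (A j) (L j) (cc j)) t = 0 :=
        fun j => Set.indicator_of_notMem (hex j) _
      simp only [hz, Finset.sum_const_zero]
      rw [hF0 t hex]
      exact tendsto_const_nhds
  -- cross-section and the function f
  set Y : Set (Fin m' → ℝ) :=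
    Set.univ.pi (fun l => Set.Ico (x0 (Fin.succ l) - ρ) (x0 (Fin.succ l) + ρ)) with hY
  have hYmeas : MeasurableSet Y := MeasurableSet.univ_pi fun l => measurableSet_Ico
  have hYvol : volume Y = ENNReal.ofReal W := by
    rw [hY, volume_pi_pi]
    have h1 : ∀ l : Fin m',
        volume (Set.Ico (x0 (Fin.succ l) - ρ) (x0 (Fin.succ l) + ρ)) = ENNReal.ofReal (2*ρ) := by
      intro l
      rw [Real.volume_Ico]
      congr 1
      ring
    rw [Finset.prod_congr rfl fun l _ => h1 l, Finset.prod_const, ← ENNReal.ofReal_pow (by positivity)]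
    simp [hW]
  set f : (Fin (m'+1) → ℝ) → ℝ :=
    fun x => F (x 0) * Set.indicator Y (fun _ => (1:ℝ)) (fun l => x (Fin.succ l)) with hf
  have hfmeas : Measurable f := by
    refine (hFmeas.comp (measurable_pi_apply 0)).mul ?_
    exact (measurable_const.indicator hYmeas).comp
      (measurable_pi_lambda _ fun l => measurable_pi_apply _)
  have hfval : ∀ (t : ℝ) (y : Fin m' → ℝ), y ∈ Y → f (Fin.cons t y) = F t := by
    intro t y hy
    rw [hf]
    simp only [Fin.cons_zero, Fin.cons_succ]
    rw [Set.indicator_of_mem hy, mul_one]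
  have hfval0 : ∀ (t : ℝ) (y : Fin m' → ℝ), y ∉ Y → f (Fin.cons t y) = 0 := by
    intro t y hy
    rw [hf]
    simp only [Fin.cons_zero, Fin.cons_succ]
    rw [Set.indicator_of_notMem hy, mul_zero]
  -- the cubes
  set E := MeasurableEquiv.piFinSuccAbove (fun _ : Fin (m'+1) => ℝ) 0 with hE
  set cube : ℕ → Set (Fin (m'+1) → ℝ) := fun j => E ⁻¹' ((I j) ×ˢ Y) with hcube
  have hcubemeas : ∀ j, MeasurableSet (cube j) :=
    fun j => E.measurable (measurableSet_Ico.prod hYmeas)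
  have hcubemem : ∀ j x, x ∈ cube j ↔ (x 0 ∈ I j ∧ (fun l => x (Fin.succ l)) ∈ Y) := by
    intro j x
    rw [hcube]
    simp only [Set.mem_preimage, hE, Eapp_eq]
    exact Set.mem_prod
  have hcubesub : ∀ j, cube j ⊆ K := by
    intro j x hx
    rw [hcubemem] at hx
    refine hbox x fun i => ?_
    refine Fin.cases ?_ (fun l => ?_) i
    · exact hIsub j hx.1
    · exact hx.2 l (Set.mem_univ _)
  have hcubedisj : ∀ j1 j2, j1 ≠ j2 → Disjoint (cube j1) (cube j2) := by
    intro j1 j2 hne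
    rw [hcube]
    simp only
    refine Disjoint.preimage _ ?_
    rw [Set.disjoint_left]
    rintro ⟨t, y⟩ ⟨ht1, hy1⟩ ⟨ht2, hy2⟩
    rcases Nat.lt_or_ge j1 j2 with h | h
    · exact Set.disjoint_left.mp (hIdisj _ _ h) ht1 ht2
    · exact Set.disjoint_left.mp (hIdisj _ _ (by omega)) ht2 ht1
  -- main per-cube lower bound
  have hmain : ∀ k, 1 ≤ k → ∀ g ∈ Tau σ (r k) (n k) (m'+1), ∀ j, k ≤ j →
      ENNReal.ofReal (b j) ≤ ∫⁻ x in cube j, (‖f x - g x‖₊ : ENNReal) ^ q := by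
    intro k hk g hg j hjk
    have hgmeas : Measurable g := (tau_continuous hσc g hg).measurable
    set H : (Fin (m'+1) → ℝ) → ENNReal := fun x => (‖f x - g x‖₊ : ENNReal) ^ q with hH
    have hHmeas : Measurable H := ((hfmeas.sub hgmeas).nnnorm.coe_nnreal_ennreal).pow_const q
    have hHcons : Measurable fun z : (Fin m' → ℝ) × ℝ => H (Fin.cons z.2 z.1) := by
      refine hHmeas.comp ?_
      refine measurable_pi_lambda _ fun i => ?_
      refine Fin.cases ?_ (fun l => ?_) i
      · simpa using measurable_snd
      · simpa [Function.comp_def] using (measurable_pi_apply l).comp measurable_fst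
    have hcubeint : ∫⁻ x in cube j, H x = ∫⁻ y in Y, ∫⁻ t in I j, H (Fin.cons t y) :=
      cons_setLIntegral m' H hHmeas (I j) Y
    have hinner : ∀ y ∈ Y, ENNReal.ofReal ((N j : ℝ) * (A j ^ q * L j) / 2)
        ≤ ∫⁻ t in I j, H (Fin.cons t y) := by
      intro y hy
      have hrat : RatD (D k) (fun t => g (Fin.cons t y)) := by
        have h0 := tau_line hQ hσ (le_max_left p.natDegree Q.natDegree)
          (le_max_right p.natDegree Q.natDegree) g hg (hr k)
          (Fin.cons 0 y) (Fin.cons 1 fun _ => 0)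
        have h1 : ∀ t : ℝ,
            (fun jj => (Fin.cons 1 fun _ => 0 : Fin (m'+1) → ℝ) jj * t
                + (Fin.cons 0 y : Fin (m'+1) → ℝ) jj)
              = Fin.cons t y := by
          intro t
          funext jj
          refine Fin.cases ?_ (fun l => ?_) jj <;> simp
        exact h0.congr (fun t => by rw [h1 t])
      have hpat : ∫⁻ t in I j, H (Fin.cons t y)
          = ∫⁻ t in I j, (‖pattern (A j) (L j) (cc j) t - g (Fin.cons t y)‖₊ : ENNReal) ^ q := by
        refine setLIntegral_congr_fun measurableSet_Ico (fun t ht => ?_)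
        rw [hH]
        simp only
        rw [hfval t y hy, hFj j t ht]
      rw [hpat]
      have h2 := univar hq (hN4 k j hjk) (c := cc j) (hLpos j) (hA0 j) hrat
      have h3 : cc j + (N j : ℝ) * (2 * L j) = cc j + ℓ j := by rw [hℓeq j]
      rw [h3] at h2
      exact h2
    have houter : ENNReal.ofReal ((N j : ℝ) * (A j ^ q * L j) / 2) * volume Y
        ≤ ∫⁻ y in Y, ∫⁻ t in I j, H (Fin.cons t y) := by
      rw [← setLIntegral_const]
      exact setLIntegral_mono hHcons.lintegral_prod_right' hinner
    rw [hcubeint]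
    refine le_trans (le_of_eq ?_) houter
    rw [hYvol, ← ENNReal.ofReal_mul (div_nonneg (mul_nonneg (Nat.cast_nonneg _)
      (mul_nonneg (Real.rpow_nonneg (hA0 j) q) (hLpos j).le)) (by norm_num))]
    congr 1
    have hNL : (N j : ℝ) * L j = ℓ j / 2 := by linarith [hℓeq j]
    rw [hAq j]
    have hl0 := (hℓpos j).ne'
    have hW0 := hWpos.ne'
    rw [show (N j:ℝ) * (4 * b j / (ℓ j * W) * L j) / 2 * W
        = ((N j:ℝ) * L j) * (4 * b j) / (ℓ j * W) / 2 * W from by ring, hNL]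
    field_simp
    ring
  -- summed lower bound
  have hlow : ∀ k, 1 ≤ k → ∀ g ∈ Tau σ (r k) (n k) (m'+1), ∀ M, k ≤ M →
      ENNReal.ofReal (ts k - ts (M+1)) ≤ ∫⁻ x in K, (‖f x - g x‖₊ : ENNReal) ^ q := by
    intro k hk g hg M hkM
    have hdisjf : (↑(Finset.Icc k M) : Set ℕ).PairwiseDisjoint cube :=
      fun i _ j _ hij => hcubedisj i j hij
    have hsub : (⋃ j ∈ Finset.Icc k M, cube j) ⊆ K := by
      intro x hx
      simp only [Set.mem_iUnion] at hx
      obtain ⟨j, _, hj⟩ := hx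
      exact hcubesub j hj
    calc ENNReal.ofReal (ts k - ts (M+1))
        = ENNReal.ofReal (∑ j ∈ Finset.Icc k M, b j) := by
          rw [hb]
          rw [sum_Icc_telescope ts k M (by omega)]
      _ = ∑ j ∈ Finset.Icc k M, ENNReal.ofReal (b j) :=
          ENNReal.ofReal_sum_of_nonneg (fun j _ => hb0 j)
      _ ≤ ∑ j ∈ Finset.Icc k M, ∫⁻ x in cube j, (‖f x - g x‖₊ : ENNReal) ^ q :=
          Finset.sum_le_sum fun j hj => hmain k hk g hg j (Finset.mem_Icc.mp hj).1
      _ = ∫⁻ x in ⋃ j ∈ Finset.Icc k M, cube j, (‖f x - g x‖₊ : ENNReal) ^ q :=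
          (lintegral_biUnion_finset hdisjf (fun j _ => hcubemeas j) _).symm
      _ ≤ ∫⁻ x in K, (‖f x - g x‖₊ : ENNReal) ^ q := lintegral_mono_set hsub
  have hq0 : ENNReal.ofReal q ≠ 0 := (ENNReal.ofReal_pos.mpr hq).ne'
  have hqt : ENNReal.ofReal q ≠ ⊤ := ENNReal.ofReal_ne_top
  have htoReal : (ENNReal.ofReal q).toReal = q := ENNReal.toReal_ofReal hq.le
  -- upper bound for the norm of f
  have hFbound : ∫⁻ t, (‖F t‖₊ : ENNReal) ^ q ≤ ENNReal.ofReal (4 * ts 0 / W) := by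
    have hptw : ∀ t, (‖F t‖₊ : ENNReal) ^ q
        ≤ ∑' j, Set.indicator (I j) (fun _ => ENNReal.ofReal (A j ^ q)) t := by
      intro t
      by_cases hex : ∃ j, t ∈ I j
      · obtain ⟨j0, hj0⟩ := hex
        have h1 : (‖F t‖₊ : ENNReal) ^ q = ENNReal.ofReal (A j0 ^ q) := by
          rw [hFj j0 t hj0, ← enorm_eq_nnnorm, Real.enorm_eq_ofReal_abs, abs_pattern _ _ _ (hA0 j0),
            ENNReal.ofReal_rpow_of_nonneg (hA0 j0) hq.le]
        rw [h1]
        refine le_trans (le_of_eq ?_) (ENNReal.le_tsum j0)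
        rw [Set.indicator_of_mem hj0]
      · push_neg at hex
        rw [hF0 t hex]
        simp [ENNReal.zero_rpow_of_pos hq]
    calc ∫⁻ t, (‖F t‖₊ : ENNReal) ^ q
        ≤ ∫⁻ t, ∑' j, Set.indicator (I j) (fun _ => ENNReal.ofReal (A j ^ q)) t :=
          lintegral_mono hptw
      _ = ∑' j, ∫⁻ t, Set.indicator (I j) (fun _ => ENNReal.ofReal (A j ^ q)) t :=
          lintegral_tsum (fun j => (measurable_const.indicator measurableSet_Ico).aemeasurable)
      _ = ∑' j, ENNReal.ofReal (4 * b j / W) := by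
          refine tsum_congr fun j => ?_
          rw [lintegral_indicator measurableSet_Ico, setLIntegral_const]
          have hv : volume (I j) = ENNReal.ofReal (ℓ j) := by
            rw [hI]
            simp only
            rw [Real.volume_Ico]
            congr 1
            ring
          rw [hv, hAq j, ← ENNReal.ofReal_mul (hABase j)]
          congr 1
          have hl0 := (hℓpos j).ne'
          have hW0 := hWpos.ne'
          field_simp
      _ ≤ ENNReal.ofReal (4 * ts 0 / W) := by
          rw [ENNReal.tsum_eq_iSup_sum]
          refine iSup_le fun s => ?_
          have hnn : ∀ j ∈ s, 0 ≤ 4 * b j / W :=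
            fun j _ => div_nonneg (by nlinarith [hb0 j]) hWpos.le
          rw [← ENNReal.ofReal_sum_of_nonneg hnn]
          refine ENNReal.ofReal_le_ofReal ?_
          have hsr : s ⊆ Finset.range (s.sup id + 1) := by
            intro j hj
            exact Finset.mem_range.mpr (by
              have h9 := Finset.le_sup (f := id) hj
              simp only [id] at h9
              omega)
          have h1 : ∑ j ∈ s, 4 * b j / W ≤ ∑ j ∈ Finset.range (s.sup id + 1), 4 * b j / W :=
            Finset.sum_le_sum_of_subset_of_nonneg hsr
              (fun j _ _ => div_nonneg (by nlinarith [hb0 j]) hWpos.le)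
          refine h1.trans ?_
          have h2 : ∑ j ∈ Finset.range (s.sup id + 1), 4 * b j / W
              = (4 / W) * ∑ j ∈ Finset.range (s.sup id + 1), b j := by
            rw [Finset.mul_sum]
            refine Finset.sum_congr rfl fun j _ => ?_
            ring
          rw [h2, hb]
          rw [Finset.sum_range_sub' ts]
          rw [show 4 * ts 0 / W = (4 / W) * ts 0 from by ring]
          have h3 : ts 0 - ts (s.sup id + 1) ≤ ts 0 := by
            have := hts_nn (s.sup id + 1)
            linarith
          have h4 : 0 ≤ 4 / W := by positivity
          nlinarith
  have hfint : ∫⁻ x, (‖f x‖₊ : ENNReal) ^ q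
      ≤ ENNReal.ofReal (4 * ts 0 / W) * ENNReal.ofReal W := by
    rw [cons_lintegral m' (fun x => (‖f x‖₊ : ENNReal) ^ q)
      (hfmeas.nnnorm.coe_nnreal_ennreal.pow_const q)]
    calc ∫⁻ y : Fin m' → ℝ, ∫⁻ t : ℝ, (‖f (Fin.cons t y)‖₊ : ENNReal) ^ q
        ≤ ∫⁻ y, Set.indicator Y (fun _ => ENNReal.ofReal (4 * ts 0 / W)) y := by
          refine lintegral_mono fun y => ?_
          by_cases hy : y ∈ Y
          · rw [Set.indicator_of_mem hy]
            refine le_trans (le_of_eq (lintegral_congr fun t => by rw [hfval t y hy])) hFbound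
          · rw [Set.indicator_of_notMem hy]
            refine le_of_eq ?_
            calc ∫⁻ t : ℝ, (‖f (Fin.cons t y)‖₊ : ENNReal) ^ q
                = ∫⁻ _t : ℝ, (0:ENNReal) := by
                  refine lintegral_congr fun t => ?_
                  rw [hfval0 t y hy]
                  simp [ENNReal.zero_rpow_of_pos hq]
              _ = 0 := lintegral_zero
      _ = ENNReal.ofReal (4 * ts 0 / W) * volume Y := by
          rw [lintegral_indicator hYmeas, setLIntegral_const]
      _ = _ := by rw [hYvol]
  refine ⟨f, ?_, ?_⟩
  · constructor
    · exact hfmeas.aestronglyMeasurable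
    · rw [eLpNorm_eq_lintegral_rpow_enorm_toReal hq0 hqt, htoReal]
      refine ENNReal.rpow_lt_top_of_nonneg (by positivity) ?_
      refine ne_of_lt (lt_of_le_of_lt (setLIntegral_le_lintegral _ _) ?_)
      exact lt_of_le_of_lt hfint (ENNReal.mul_lt_top ENNReal.ofReal_lt_top ENNReal.ofReal_lt_top)
  · intro k hk g hg
    rcases le_or_gt (ε k) 0 with hek | hek
    · rw [ENNReal.ofReal_of_nonpos hek]
      exact bot_le
    · rw [eLpNorm_eq_lintegral_rpow_enorm_toReal hq0 hqt, htoReal, one_div,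
        ENNReal.le_rpow_inv_iff hq]
      have h1 : ENNReal.ofReal (ε k) ^ q = ENNReal.ofReal ((ε k) ^ q) :=
        ENNReal.ofReal_rpow_of_nonneg hek.le hq.le
      rw [h1]
      have hgoal : ENNReal.ofReal (ts k) ≤ ∫⁻ x in K, (‖f x - g x‖₊ : ENNReal) ^ q := by
        have hlim : Filter.Tendsto (fun M => ENNReal.ofReal (ts k - ts (M+1))) Filter.atTop
            (nhds (ENNReal.ofReal (ts k))) := by
          refine (ENNReal.continuous_ofReal.tendsto _).comp ?_
          have h5 := hts_tend.comp (Filter.tendsto_add_atTop_nat 1)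
          have h6 := (tendsto_const_nhds (x := ts k) (f := Filter.atTop (α := ℕ))).sub h5
          simpa using h6
        refine le_of_tendsto hlim ?_
        filter_upwards [Filter.eventually_ge_atTop k] with M hM
        exact hlow k hk g hg M hM
      have h2 : (ε k) ^ q ≤ ts k := by
        have h3 := hts_ge k
        rw [max_eq_left hek.le] at h3
        exact h3
      refine le_trans (ENNReal.ofReal_le_ofReal h2) (hgoal.trans (le_of_eq ?_))
      refine lintegral_congr fun x => ?_
      rfl
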